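/- arXiv:1705.08417 — 4 statements merged into one kernel-verified Lean document; each statement's English description precedes it below -/
import Mathlib

section
/- If an environment class M is closed under the flipping operation μ ↦ μ⁻ (which preserves the distribution over observed histories and satisfies G_t(μ,π,s₀) + G_t(μ⁻,π,s₀) = t for all π), then for every policy π, the worst-case regret over M satisfies Reg(M,π,s₀,t) ≥ (1/2)·max_{π̌} Reg(M,π̌,s₀,t). In particular, no policy can achieve worst-case regret better than half the maximal possible worst-case regret. -/
/-- If an environment class M (indexed by a finite nonempty type) is
closed under a flipping operation μ ↦ μ⁻ satisfying
(a) every policy behaves identically in μ and μ⁻ (captured here by flipping being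
an operation on the class, with G evaluated for the same policy), and
(b) G_t(μ,π,s₀) = t - G_t(μ⁻,π,s₀) for all π,
then for every policy π the worst-case regret over M is at least half the maximal
possible worst-case regret: Reg(M,π,s₀,t) ≥ (1/2)·max_{π̌} Reg(M,π̌,s₀,t). -/
theorem no_free_lunch_half_regret
    (M : Type*) [Fintype M] [Nonempty M]
    (P : Type*) [Fintype P] [Nonempty P]
    (t : ℝ) (G : M → P → ℝ)
    (hG0 : ∀ μ π, 0 ≤ G μ π) (hGt : ∀ μ π, G μ π ≤ t)
    (flip : M → M)
    (hflip : ∀ μ π, G (flip μ) π = t - G μ π)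
    (Reg : M → P → ℝ)
    (hReg : ∀ μ π, Reg μ π = ⨆ π' : P, (G μ π' - G μ π))
    (RegM : P → ℝ)
    (hRegM : ∀ π, RegM π = ⨆ μ : M, Reg μ π) :
    ∀ π : P, RegM π ≥ (1 / 2) * ⨆ π' : P, RegM π' := by
  intro π
  have hb : ∀ (f : P → ℝ), BddAbove (Set.range f) := fun f => (Set.finite_range f).bddAbove
  have hbM : ∀ (f : M → ℝ), BddAbove (Set.range f) := fun f => (Set.finite_range f).bddAbove
  have key : ∀ μ π', Reg μ π' ≤ 2 * RegM π := by
    intro μ π'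
    rw [hReg]
    apply ciSup_le
    intro π''
    have h1 : G μ π'' - G μ π ≤ RegM π := by
      calc G μ π'' - G μ π ≤ Reg μ π := by
            rw [hReg]; exact le_ciSup (hb fun p => G μ p - G μ π) π''
        _ ≤ RegM π := by rw [hRegM]; exact le_ciSup (hbM fun m => Reg m π) μ
    have h2 : G μ π - G μ π' ≤ RegM π := by
      calc G μ π - G μ π' = G (flip μ) π' - G (flip μ) π := by rw [hflip, hflip]; ring
        _ ≤ Reg (flip μ) π := by
            rw [hReg]; exact le_ciSup (hb fun p => G (flip μ) p - G (flip μ) π) π'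
        _ ≤ RegM π := by rw [hRegM]; exact le_ciSup (hbM fun m => Reg m π) (flip μ)
    linarith
  have hfin : (⨆ π' : P, RegM π') ≤ 2 * RegM π := by
    apply ciSup_le
    intro π'
    rw [hRegM]
    exact ciSup_le fun μ => key μ π'
  linarith
end

section
/- Consider a finite set S of states partitioned into safe states S_safe and risky states S_risky, where at most q risky states are corrupt (observed reward differs from true reward), and true and observed reward functions take values in [0,1]. Suppose the quantilising agent picks a state uniformly at random from S^δ = {s : r̂(s) ≥ δ} and receives the true reward ṙ of that state each time step. If corrupt states may have true reward as low as 0 but non-corrupt states in S^δ have true reward at least δ, and |S^δ| > 0, then the expected per-step true reward of the quantilising agent is at least δ·(1 - q/|S^δ|), so its time-averaged regret relative to a maximal per-step reward of 1 is at most 1 - δ·(1 - q/|S^δ|). -/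
open Finset

/-- Quantilisation bound (simple case). S finite; r̂, ṙ : S → [0,1];
at most q states are corrupt (r̂ ≠ ṙ); S^δ = {s : r̂ s ≥ δ} is nonempty. The
quantilising agent picks uniformly from S^δ and receives ṙ of the chosen state, so
its expected per-step true reward is (∑_{s∈S^δ} ṙ s)/|S^δ| ≥ δ(1 - q/|S^δ|),
and its time-averaged regret is at most 1 - δ(1 - q/|S^δ|). -/
theorem quantilisation_simple_bound
    (S : Type*) [Fintype S] [DecidableEq S]
    (rhat rdot : S → ℝ)
    (hhat : ∀ s, 0 ≤ rhat s ∧ rhat s ≤ 1)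
    (hdot : ∀ s, 0 ≤ rdot s ∧ rdot s ≤ 1)
    (q : ℕ)
    (hq : (Finset.univ.filter (fun s => rhat s ≠ rdot s)).card ≤ q)
    (δ : ℝ) (hδ0 : 0 ≤ δ)
    (Sδ : Finset S) (hSδ : Sδ = Finset.univ.filter (fun s => δ ≤ rhat s))
    (hne : 0 < Sδ.card) :
    δ * (1 - (q : ℝ) / Sδ.card) ≤ (∑ s ∈ Sδ, rdot s) / Sδ.card ∧
    1 - (∑ s ∈ Sδ, rdot s) / Sδ.card ≤ 1 - δ * (1 - (q : ℝ) / Sδ.card) := by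
  have hcard : (0:ℝ) < Sδ.card := by exact_mod_cast hne
  set C := Finset.univ.filter (fun s => rhat s ≠ rdot s) with hC
  have key : δ * (Sδ.card - q) ≤ ∑ s ∈ Sδ, rdot s := by
    have h1 : ∑ s ∈ Sδ \ C, δ ≤ ∑ s ∈ Sδ \ C, rdot s := by
      apply Finset.sum_le_sum
      intro s hs
      simp only [Finset.mem_sdiff, hSδ, hC, Finset.mem_filter, Finset.mem_univ,
        true_and, not_not] at hs
      calc δ ≤ rhat s := hs.1
        _ = rdot s := hs.2
    have h2 : ∑ s ∈ Sδ \ C, rdot s ≤ ∑ s ∈ Sδ, rdot s := by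
      apply Finset.sum_le_sum_of_subset_of_nonneg (Finset.sdiff_subset)
      intro s _ _; exact (hdot s).1
    have h3 : (Sδ.card : ℝ) - q ≤ (Sδ \ C).card := by
      have := Finset.le_card_sdiff C Sδ
      have h5 : Sδ.card ≤ (Sδ \ C).card + q := by omega
      have h5' : (Sδ.card : ℝ) ≤ ((Sδ \ C).card : ℝ) + q := by exact_mod_cast h5
      linarith
    calc δ * (Sδ.card - q) ≤ δ * (Sδ \ C).card := by
            apply mul_le_mul_of_nonneg_left h3 hδ0
      _ = ∑ s ∈ Sδ \ C, δ := by rw [Finset.sum_const, nsmul_eq_mul, mul_comm]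
      _ ≤ ∑ s ∈ Sδ, rdot s := le_trans h1 h2
  have main : δ * (1 - (q : ℝ) / Sδ.card) ≤ (∑ s ∈ Sδ, rdot s) / Sδ.card := by
    rw [le_div_iff₀ hcard]
    have : δ * (1 - (q:ℝ)/Sδ.card) * Sδ.card = δ * (Sδ.card - q) := by
      field_simp
    rw [this]; exact key
  exact ⟨main, by linarith⟩
end

section
/- Under the assumption that for every δ ∈ [0,1] at most δ·|S| states have observed reward less than δ (equivalently |{s : r̂(s) ≥ δ}| ≥ (1-δ)|S|), and at most q states are corrupt, the quantilising agent with threshold δ has time-averaged regret at most 1 - δ·(1 - q/((1-δ)|S|)); choosing δ = 1 - √(q/|S|) yields regret at most 1 - (1 - √(q/|S|))². -/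
open Finset

/-- If for every δ at most δ|S| states have observed reward below δ
(i.e. |{s : r̂ s ≥ δ}| ≥ (1-δ)|S|), at most q states are corrupt, and
δ = 1 - √(q/|S|), then the quantilising agent's time-averaged regret is at most
1 - δ(1 - q/((1-δ)|S|)) = 1 - (1 - √(q/|S|))². -/
theorem quantilisation_optimal_threshold_bound
    (S : Type*) [Fintype S] [DecidableEq S] [Nonempty S]
    (rhat rdot : S → ℝ)
    (hhat : ∀ s, 0 ≤ rhat s ∧ rhat s ≤ 1)
    (hdot : ∀ s, 0 ≤ rdot s ∧ rdot s ≤ 1)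
    (q : ℕ) (hq0 : 0 < q) (hqS : q ≤ Fintype.card S)
    (hq : (Finset.univ.filter (fun s => rhat s ≠ rdot s)).card ≤ q)
    (δ : ℝ) (hδ : δ = 1 - Real.sqrt ((q : ℝ) / Fintype.card S))
    (Sδ : Finset S) (hSδ : Sδ = Finset.univ.filter (fun s => δ ≤ rhat s))
    (hquantile : ((1 - δ) * Fintype.card S : ℝ) ≤ Sδ.card) :
    1 - (∑ s ∈ Sδ, rdot s) / Sδ.card ≤
      1 - δ * (1 - (q : ℝ) / ((1 - δ) * Fintype.card S)) ∧
    1 - (∑ s ∈ Sδ, rdot s) / Sδ.card ≤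
      1 - (1 - Real.sqrt ((q : ℝ) / Fintype.card S)) ^ 2 := by
  have hN : (0 : ℝ) < Fintype.card S := by
    exact_mod_cast Fintype.card_pos
  set t : ℝ := Real.sqrt ((q : ℝ) / Fintype.card S) with ht
  have htpos : 0 < t := Real.sqrt_pos.mpr (by positivity)
  have ht1 : t ≤ 1 := Real.sqrt_le_one.mpr (by rw [div_le_one hN]; exact_mod_cast hqS)
  have ht2 : t ^ 2 = (q : ℝ) / Fintype.card S := Real.sq_sqrt (by positivity)
  have hδ0 : 0 ≤ δ := by rw [hδ]; linarith
  have h1δ : 1 - δ = t := by rw [hδ]; ring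
  have hpos : (0 : ℝ) < (1 - δ) * Fintype.card S := by
    rw [h1δ]; positivity
  have hcard : (0 : ℝ) < Sδ.card := lt_of_lt_of_le hpos hquantile
  -- lower bound the sum
  set C : Finset S := Finset.univ.filter (fun s => rhat s ≠ rdot s) with hC
  have hG : δ * ((Sδ.card : ℝ) - q) ≤ ∑ s ∈ Sδ, rdot s := by
    have hsub : (Sδ \ C) ⊆ Sδ := Finset.sdiff_subset
    have h1 : ∑ s ∈ Sδ \ C, rdot s ≤ ∑ s ∈ Sδ, rdot s :=
      Finset.sum_le_sum_of_subset_of_nonneg hsub (fun s _ _ => (hdot s).1)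
    have h2 : δ * ((Sδ \ C).card : ℝ) ≤ ∑ s ∈ Sδ \ C, rdot s := by
      calc δ * ((Sδ \ C).card : ℝ) = ∑ _s ∈ Sδ \ C, δ := by
            rw [Finset.sum_const, nsmul_eq_mul, mul_comm]
        _ ≤ ∑ s ∈ Sδ \ C, rdot s := by
            apply Finset.sum_le_sum
            intro s hs
            have hs1 : s ∈ Sδ := Finset.mem_sdiff.mp hs |>.1
            have hs2 : s ∉ C := Finset.mem_sdiff.mp hs |>.2
            have heq : rhat s = rdot s := by
              by_contra h
              exact hs2 (by simp [hC, h])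
            have : δ ≤ rhat s := by
              rw [hSδ] at hs1
              simpa using (Finset.mem_filter.mp hs1).2
            linarith
    have h3 : (Sδ.card : ℝ) - q ≤ ((Sδ \ C).card : ℝ) := by
      have := Finset.card_le_card_sdiff_add_card (s := Sδ) (t := C)
      have hq' : (C.card : ℝ) ≤ q := by exact_mod_cast hq
      have : (Sδ.card : ℝ) ≤ (Sδ \ C).card + C.card := by exact_mod_cast this
      linarith
    calc δ * ((Sδ.card : ℝ) - q) ≤ δ * ((Sδ \ C).card : ℝ) :=
          mul_le_mul_of_nonneg_left h3 hδ0
      _ ≤ ∑ s ∈ Sδ, rdot s := le_trans h2 h1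
  have hmain : δ * (1 - (q : ℝ) / ((1 - δ) * Fintype.card S)) ≤
      (∑ s ∈ Sδ, rdot s) / Sδ.card := by
    have hdiv : (q : ℝ) / Sδ.card ≤ (q : ℝ) / ((1 - δ) * Fintype.card S) :=
      div_le_div_of_nonneg_left (by positivity) hpos hquantile
    have step1 : δ * (1 - (q : ℝ) / ((1 - δ) * Fintype.card S)) ≤
        δ * (1 - (q : ℝ) / Sδ.card) := by
      apply mul_le_mul_of_nonneg_left _ hδ0
      linarith
    have step2 : δ * (1 - (q : ℝ) / Sδ.card) ≤ (∑ s ∈ Sδ, rdot s) / Sδ.card := by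
      rw [le_div_iff₀ hcard]
      have : δ * (1 - (q : ℝ) / Sδ.card) * Sδ.card = δ * ((Sδ.card : ℝ) - q) := by
        field_simp
      rw [this]; exact hG
    linarith
  constructor
  · linarith
  · have heq : δ * (1 - (q : ℝ) / ((1 - δ) * Fintype.card S)) = (1 - t) ^ 2 := by
      have : (q : ℝ) / ((1 - δ) * Fintype.card S) = t := by
        rw [h1δ]
        rw [eq_comm, eq_div_iff (by positivity)]
        have : t * (t * Fintype.card S) = t ^ 2 * Fintype.card S := by ring
        rw [this, ht2]
        field_simp
      rw [this, hδ]; ring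
    linarith
end

section
/- If a policy π* minimises b-expected regret over a countable class M (with prior b of full support) and some policy sequence achieves sublinear regret o(t) uniformly over M, then π* has sublinear regret in every μ ∈ M: there is no μ' ∈ M and constants k, m > 0 with Reg(μ', π*, s₀, t) > kt - m for all t. -/
/-- If π* minimises b-expected regret over a countable class M with
full-support prior b, and some policy sequence (π_t) achieves uniformly sublinear
regret f(t) = o(t), then π* has sublinear regret in every environment: there is
no μ' ∈ M and constants k, m > 0 with Reg(μ',π*,s₀,t) > k·t - m for all t. -/
theorem bayes_optimal_sublinear_regret
    (M : Type*) [Countable M]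
    (P : Type*)
    (b : M → ℝ) (hb : ∀ μ, 0 < b μ) (hbsum : Summable b)
    (hbone : ∑' μ, b μ = 1)
    (Reg : M → P → ℕ → ℝ)
    (hReg0 : ∀ μ π t, 0 ≤ Reg μ π t) (hRegt : ∀ μ π t, Reg μ π t ≤ t)
    (πstar : P)
    (hopt : ∀ (π : P) (t : ℕ),
      ∑' μ, b μ * Reg μ πstar t ≤ ∑' μ, b μ * Reg μ π t)
    (πseq : ℕ → P) (f : ℕ → ℝ)
    (hf : Filter.Tendsto (fun t => f t / t) Filter.atTop (nhds 0))
    (hseq : ∀ (μ : M) (t : ℕ), Reg μ (πseq t) t ≤ f t) :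
    ¬ ∃ (μ' : M) (k m : ℝ), 0 < k ∧ 0 < m ∧
        ∀ t : ℕ, k * t - m < Reg μ' πstar t := by
  rintro ⟨μ', k, m, hk, hm, hlin⟩
  have hsum : ∀ (π : P) (t : ℕ), Summable (fun μ => b μ * Reg μ π t) := by
    intro π t
    refine Summable.of_nonneg_of_le
      (fun μ => mul_nonneg (hb μ).le (hReg0 μ π t))
      (fun μ => mul_le_mul_of_nonneg_left (hRegt μ π t) (hb μ).le)
      (hbsum.mul_right (t:ℝ))
  -- key bound: b μ' * Reg μ' πstar t ≤ f t
  have key : ∀ t : ℕ, b μ' * Reg μ' πstar t ≤ f t := by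
    intro t
    have h1 : b μ' * Reg μ' πstar t ≤ ∑' μ, b μ * Reg μ πstar t :=
      Summable.le_tsum (hsum πstar t) μ'
        (fun μ _ => mul_nonneg (hb μ).le (hReg0 μ πstar t))
    have h2 : ∑' μ, b μ * Reg μ (πseq t) t ≤ ∑' μ, b μ * f t := by
      refine Summable.tsum_le_tsum (fun μ =>
        mul_le_mul_of_nonneg_left (hseq μ t) (hb μ).le)
        (hsum (πseq t) t) (hbsum.mul_right (f t))
    have h3 : ∑' μ, b μ * f t = f t := by
      rw [tsum_mul_right, hbone, one_mul]
    calc b μ' * Reg μ' πstar t ≤ ∑' μ, b μ * Reg μ πstar t := h1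
      _ ≤ ∑' μ, b μ * Reg μ (πseq t) t := hopt (πseq t) t
      _ ≤ f t := by rw [← h3]; exact h2
  set c := b μ' * k / 2 with hc
  have hcpos : 0 < c := div_pos (mul_pos (hb μ') hk) two_pos
  have hev1 : ∀ᶠ t : ℕ in Filter.atTop, f t / t < c :=
    hf.eventually (Filter.Tendsto.eventually_lt_const hcpos Filter.tendsto_id)
  have hev2 : ∀ᶠ t : ℕ in Filter.atTop, (2 * m / k : ℝ) < t :=
    (tendsto_natCast_atTop_atTop (R:=ℝ)).eventually_gt_atTop _
  have hev3 : ∀ᶠ t : ℕ in Filter.atTop, 1 ≤ t := Filter.eventually_ge_atTop 1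
  obtain ⟨t, h1, h2, h3⟩ := (hev1.and (hev2.and hev3)).exists
  have htpos : (0:ℝ) < t := by exact_mod_cast h3
  -- from h2 : 2*m/k < t, get m < k/2 * t
  have hm' : m < k / 2 * t := by
    rw [div_lt_iff₀ hk] at h2
    linarith
  -- f t < c * t
  have hft : f t < c * t := by
    have := (div_lt_iff₀ htpos).mp h1
    linarith
  have hchain : b μ' * (k * t - m) < f t :=
    lt_of_lt_of_le (mul_lt_mul_of_pos_left (hlin t) (hb μ')) (key t)
  have hlow : c * t ≤ b μ' * (k * t - m) := by
    have : k / 2 * t ≤ k * t - m := by linarith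
    calc c * t = b μ' * (k / 2 * t) := by ring
      _ ≤ b μ' * (k * t - m) := mul_le_mul_of_nonneg_left this (hb μ').le
  linarith
end
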